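/- arXiv:2304.12065 — 2 statements merged into one kernel-verified Lean document; each statement's English description precedes it below -/
import Mathlib

section
/- For any $m \geq 1$ and positive semi-definite symmetric $n\times n$ matrices $A, B_1, \dots, B_m$: $\det(A)^{m-1} \det(B_1 + \cdots + B_m) \leq \prod_{k=1}^m \det(A + B_k)$. -/
set_option maxHeartbeats 1000000

open Matrix
open scoped MatrixOrder

variable {n : ℕ}

private lemma psd_det_nonneg {C : Matrix (Fin n) (Fin n) ℝ} (hC : C.PosSemidef) :
    0 ≤ C.det := by
  rw [hC.1.det_eq_prod_eigenvalues]
  exact Finset.prod_nonneg fun i _ => by exact_mod_cast hC.eigenvalues_nonneg i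

private lemma one_le_det_one_add {C : Matrix (Fin n) (Fin n) ℝ} (hC : C.PosSemidef) :
    1 ≤ (1 + C).det := by
  have hH := hC.1
  set V : Matrix (Fin n) (Fin n) ℝ := (hH.eigenvectorUnitary : Matrix (Fin n) (Fin n) ℝ) with hV
  have hVU : V * star V = 1 := (Matrix.mem_unitaryGroup_iff).mp hH.eigenvectorUnitary.2
  have h1 : (1 : Matrix (Fin n) (Fin n) ℝ) + C
      = V * (1 + diagonal (RCLike.ofReal ∘ hH.eigenvalues)) * star V := by
    conv_lhs => rw [hH.spectral_theorem]
    rw [mul_add, add_mul, mul_one]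
    congr 1
    rw [hVU]
  have hVU' : star V * V = 1 := (Matrix.mem_unitaryGroup_iff').mp hH.eigenvectorUnitary.2
  rw [h1, det_mul, det_mul, mul_comm, ← mul_assoc, ← det_mul, hVU', det_one, one_mul]
  have : (1 : Matrix (Fin n) (Fin n) ℝ) + diagonal (RCLike.ofReal ∘ hH.eigenvalues)
      = diagonal (fun i => 1 + hH.eigenvalues i) := by
    rw [← diagonal_one, diagonal_add]
    congr 1
  rw [this, det_diagonal]
  have := Finset.prod_le_prod (s := Finset.univ) (f := fun _ => (1:ℝ))
    (g := fun i => 1 + hH.eigenvalues i) (fun i _ => zero_le_one)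
    (fun i _ => le_add_of_nonneg_right (hC.eigenvalues_nonneg i))
  simpa using this

private lemma det_mono {P Q : Matrix (Fin n) (Fin n) ℝ} (hP : P.PosSemidef)
    (hQ : Q.PosSemidef) : P.det ≤ (P + Q).det := by
  by_cases hd : P.det = 0
  · rw [hd]; exact psd_det_nonneg (hP.add hQ)
  · set S := CFC.sqrt P with hS
    have hSS : S * S = P := CFC.sqrt_mul_sqrt_self P hP.nonneg
    have hSdet : S.det * S.det = P.det := by rw [← det_mul, hSS]
    have hSd : S.det ≠ 0 := fun h => hd (by rw [← hSdet, h, zero_mul])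
    have hSherm : Sᴴ = S := (CFC.sqrt_nonneg P).posSemidef.1
    have hSinv : (S⁻¹)ᴴ = S⁻¹ := by rw [conjTranspose_nonsing_inv, hSherm]
    have hC : (S⁻¹ * Q * S⁻¹).PosSemidef := by
      have := hQ.mul_mul_conjTranspose_same S⁻¹
      rwa [hSinv] at this
    have key : P + Q = S * (1 + S⁻¹ * Q * S⁻¹) * S := by
      rw [mul_add, mul_one, add_mul, hSS, ← mul_assoc, ← mul_assoc,
        Matrix.mul_nonsing_inv _ (isUnit_iff_ne_zero.mpr hSd), one_mul,
        mul_assoc, Matrix.nonsing_inv_mul _ (isUnit_iff_ne_zero.mpr hSd), mul_one]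
    rw [key, det_mul, det_mul, mul_comm, ← mul_assoc, hSdet]
    have hPpos : 0 < P.det := (psd_det_nonneg hP).lt_of_ne (Ne.symm hd)
    nlinarith [one_le_det_one_add hC, hPpos]

private lemma det_one_add_add_le {M N : Matrix (Fin n) (Fin n) ℝ} (hM : M.PosSemidef)
    (hN : N.PosSemidef) : (1 + M + N).det ≤ (1 + M).det * (1 + N).det := by
  have hT : (1 + M : Matrix (Fin n) (Fin n) ℝ).PosDef := Matrix.PosDef.one.add_posSemidef hM
  have hTs : (1 + M : Matrix (Fin n) (Fin n) ℝ).PosSemidef := hT.posSemidef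
  set S := CFC.sqrt (1 + M) with hSdef
  have hSS : S * S = 1 + M := CFC.sqrt_mul_sqrt_self (1 + M) hTs.nonneg
  have hSdet : S.det * S.det = (1 + M).det := by rw [← det_mul, hSS]
  have hSd : S.det ≠ 0 := fun h => by
    rw [h, mul_zero] at hSdet; exact hT.det_pos.ne' hSdet.symm
  have hSherm : Sᴴ = S := (CFC.sqrt_nonneg (1 + M)).posSemidef.1
  have hSinv : (S⁻¹)ᴴ = S⁻¹ := by rw [conjTranspose_nonsing_inv, hSherm]
  set R := CFC.sqrt N with hRdef
  have hRR : R * R = N := CFC.sqrt_mul_sqrt_self N hN.nonneg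
  have hRherm : Rᴴ = R := (CFC.sqrt_nonneg N).posSemidef.1
  -- 1 + M + N = S * (1 + S⁻¹ N S⁻¹) * S
  have key : 1 + M + N = S * (1 + S⁻¹ * N * S⁻¹) * S := by
    rw [mul_add, mul_one, add_mul, hSS, ← mul_assoc, ← mul_assoc,
      Matrix.mul_nonsing_inv _ (isUnit_iff_ne_zero.mpr hSd), one_mul,
      mul_assoc, Matrix.nonsing_inv_mul _ (isUnit_iff_ne_zero.mpr hSd), mul_one]
  -- det(1 + S⁻¹ N S⁻¹) = det(1 + R (S*S)⁻¹ R)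
  have swap : (1 + S⁻¹ * N * S⁻¹).det = (1 + R * (1 + M)⁻¹ * R).det := by
    have : S⁻¹ * N * S⁻¹ = (S⁻¹ * R) * (R * S⁻¹) := by
      rw [← hRR]; noncomm_ring
    rw [this, det_one_add_mul_comm]
    congr 2
    rw [← hSS, Matrix.mul_inv_rev]
    noncomm_ring
  -- 1 - (1+M)⁻¹ = S⁻¹ * M * S⁻¹ is PSD
  have hM' : M = S * S - 1 := eq_sub_of_add_eq' hSS.symm
  have e1 : S⁻¹ * (S * S) * S⁻¹ = 1 := by
    rw [← mul_assoc, Matrix.nonsing_inv_mul _ (isUnit_iff_ne_zero.mpr hSd), one_mul,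
      Matrix.mul_nonsing_inv _ (isUnit_iff_ne_zero.mpr hSd)]
  have hres : (1 : Matrix (Fin n) (Fin n) ℝ) - (1 + M)⁻¹ = S⁻¹ * M * S⁻¹ := by
    rw [← hSS, Matrix.mul_inv_rev]
    conv_rhs => rw [hM']
    rw [mul_sub, mul_one, sub_mul, e1]
  have hresPSD : ((1 : Matrix (Fin n) (Fin n) ℝ) - (1 + M)⁻¹).PosSemidef := by
    rw [hres]
    have := hM.mul_mul_conjTranspose_same S⁻¹
    rwa [hSinv] at this
  have hinner : (1 + R * (1 + M)⁻¹ * R).PosSemidef := by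
    have h1 : (R * (1 + M)⁻¹ * R).PosSemidef := by
      have := (hT.inv.posSemidef).mul_mul_conjTranspose_same R
      rwa [hRherm] at this
    have := (Matrix.PosDef.one (n := Fin n) (R := ℝ)).posSemidef.add h1
    exact this
  have hresconj : (R * (1 - (1 + M)⁻¹) * R).PosSemidef := by
    have := hresPSD.mul_mul_conjTranspose_same R
    rwa [hRherm] at this
  have hmono : (1 + R * (1 + M)⁻¹ * R).det ≤ (1 + N).det := by
    have hsum : (1 + R * (1 + M)⁻¹ * R) + R * (1 - (1 + M)⁻¹) * R = 1 + N := by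
      rw [← hRR]; noncomm_ring
    calc (1 + R * (1 + M)⁻¹ * R).det
        ≤ ((1 + R * (1 + M)⁻¹ * R) + R * (1 - (1 + M)⁻¹) * R).det :=
          det_mono hinner hresconj
      _ = (1 + N).det := by rw [hsum]
  have hCpsd : (S⁻¹ * N * S⁻¹).PosSemidef := by
    have := hN.mul_mul_conjTranspose_same S⁻¹
    rwa [hSinv] at this
  calc (1 + M + N).det = S.det * (1 + S⁻¹ * N * S⁻¹).det * S.det := by
        rw [key, det_mul, det_mul]
    _ = (1 + M).det * (1 + S⁻¹ * N * S⁻¹).det := by rw [mul_comm, ← mul_assoc, hSdet]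
    _ = (1 + M).det * (1 + R * (1 + M)⁻¹ * R).det := by rw [swap]
    _ ≤ (1 + M).det * (1 + N).det :=
        mul_le_mul_of_nonneg_left hmono (psd_det_nonneg hTs)

private lemma psd_sum {ι : Type*} (s : Finset ι) (C : ι → Matrix (Fin n) (Fin n) ℝ)
    (hC : ∀ i, (C i).PosSemidef) : (∑ i ∈ s, C i).PosSemidef := by
  classical
  induction s using Finset.induction with
  | empty => simpa using (Matrix.PosSemidef.zero (n := Fin n) (R := ℝ))
  | insert _ _ h ih => rw [Finset.sum_insert h]; exact (hC _).add ih

private lemma det_one_add_sum_le {ι : Type*} (s : Finset ι)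
    (C : ι → Matrix (Fin n) (Fin n) ℝ) (hC : ∀ i, (C i).PosSemidef) :
    (1 + ∑ i ∈ s, C i).det ≤ ∏ i ∈ s, (1 + C i).det := by
  classical
  induction s using Finset.induction with
  | empty => simp
  | @insert a s h ih =>
    rw [Finset.sum_insert h, Finset.prod_insert h, ← add_assoc]
    calc (1 + C a + ∑ i ∈ s, C i).det
        ≤ (1 + C a).det * (1 + ∑ i ∈ s, C i).det :=
          det_one_add_add_le (hC a) (psd_sum s C hC)
      _ ≤ (1 + C a).det * ∏ i ∈ s, (1 + C i).det :=
          mul_le_mul_of_nonneg_left ih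
            (psd_det_nonneg (Matrix.PosDef.one.add_posSemidef (hC a)).posSemidef)

private lemma det_sum_le_prod {m : ℕ} (C : Fin m → Matrix (Fin n) (Fin n) ℝ)
    (hC : ∀ k, (C k).PosSemidef) :
    (∑ k, C k).det ≤ ∏ k, (1 + C k).det := by
  have h1 : (∑ k, C k).det ≤ ((∑ k, C k) + 1).det :=
    det_mono (psd_sum Finset.univ C hC) (Matrix.PosDef.one).posSemidef
  rw [add_comm] at h1
  exact h1.trans (det_one_add_sum_le Finset.univ C hC)

theorem det_bezout_inequality (n m : ℕ) (hm : 1 ≤ m)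
    (A : Matrix (Fin n) (Fin n) ℝ) (B : Fin m → Matrix (Fin n) (Fin n) ℝ)
    (hA : A.PosSemidef) (hB : ∀ k, (B k).PosSemidef) :
    A.det ^ (m - 1) * (∑ k, B k).det ≤ ∏ k, (A + B k).det := by
  by_cases hd : A.det = 0
  · by_cases hm1 : m = 1
    · subst hm1
      rw [Fin.sum_univ_one, Fin.prod_univ_one]
      simp only [Nat.sub_self, pow_zero, one_mul]
      have := det_mono (hB 0) hA
      rwa [add_comm] at this
    · have hm2 : m - 1 ≠ 0 := by omega
      rw [hd, zero_pow hm2, zero_mul]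
      exact Finset.prod_nonneg fun k _ => psd_det_nonneg (hA.add (hB k))
  · set S := CFC.sqrt A with hSdef
    have hSS : S * S = A := CFC.sqrt_mul_sqrt_self A hA.nonneg
    have hSdet : S.det * S.det = A.det := by rw [← det_mul, hSS]
    have hSd : S.det ≠ 0 := fun h => hd (by rw [← hSdet, h, zero_mul])
    have hSherm : Sᴴ = S := (CFC.sqrt_nonneg A).posSemidef.1
    have hSinv : (S⁻¹)ᴴ = S⁻¹ := by rw [conjTranspose_nonsing_inv, hSherm]
    set C : Fin m → Matrix (Fin n) (Fin n) ℝ := fun k => S⁻¹ * B k * S⁻¹ with hCdef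
    have hC : ∀ k, (C k).PosSemidef := fun k => by
      have := (hB k).mul_mul_conjTranspose_same S⁻¹
      rwa [hSinv] at this
    have key : ∀ k, A + B k = S * (1 + C k) * S := by
      intro k
      rw [hCdef]
      rw [mul_add, mul_one, add_mul, hSS, ← mul_assoc, ← mul_assoc,
        Matrix.mul_nonsing_inv _ (isUnit_iff_ne_zero.mpr hSd), one_mul,
        mul_assoc, Matrix.nonsing_inv_mul _ (isUnit_iff_ne_zero.mpr hSd), mul_one]
    have hBk : ∀ k, B k = S * C k * S := by
      intro k
      rw [hCdef, ← mul_assoc, ← mul_assoc,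
        Matrix.mul_nonsing_inv _ (isUnit_iff_ne_zero.mpr hSd), one_mul,
        mul_assoc, Matrix.nonsing_inv_mul _ (isUnit_iff_ne_zero.mpr hSd), mul_one]
    have hsum : (∑ k, B k) = S * (∑ k, C k) * S := by
      rw [Finset.mul_sum, Finset.sum_mul]
      exact Finset.sum_congr rfl fun k _ => hBk k
    have hsumdet : (∑ k, B k).det = A.det * (∑ k, C k).det := by
      rw [hsum, det_mul, det_mul, mul_comm, ← mul_assoc, hSdet]
    have hproddet : ∏ k, (A + B k).det = A.det ^ m * ∏ k, (1 + C k).det := by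
      calc ∏ k, (A + B k).det = ∏ k, (A.det * (1 + C k).det) := by
            refine Finset.prod_congr rfl fun k _ => ?_
            rw [key k, det_mul, det_mul, mul_comm, ← mul_assoc, hSdet]
        _ = A.det ^ m * ∏ k, (1 + C k).det := by
            rw [Finset.prod_mul_distrib, Finset.prod_const, Finset.card_univ,
              Fintype.card_fin]
    rw [hsumdet, hproddet, ← mul_assoc, ← pow_succ, Nat.sub_add_cancel hm]
    exact mul_le_mul_of_nonneg_left (det_sum_le_prod C hC)
      (pow_nonneg (psd_det_nonneg hA) m)
end

section
/- Let $m \geq 2$. The polynomial $P(x) = (1-mx)^m - (m-1)^{m-1} x^{m-1}(1-x)$ has a unique real root $x_m$ in the interval $(0, 1/m)$, and the function $x \mapsto \frac{(1-x)^{1-x}}{(1-mx)^{1-mx}((m-1)x)^{(m-1)x}}$ on $(0,1/m)$ attains its maximum at $x = x_m$, with maximum value $\frac{1-x_m}{1-mx_m} < 2$. -/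
open Real Set

/-- The function `x ↦ (1-x)^(1-x) / ((1-mx)^(1-mx) ((m-1)x)^((m-1)x))`,
with real powers (so that `0 ^ 0 = 1`). -/
noncomputable def bezoutRateFun (m : ℕ) (x : ℝ) : ℝ :=
  (1 - x) ^ (1 - x) /
    ((1 - m * x) ^ (1 - m * x) * (((m : ℝ) - 1) * x) ^ (((m : ℝ) - 1) * x))

/-- The polynomial `P(x) = (1-(k+2)x)^(k+2) - (k+1)^(k+1) x^(k+1) (1-x)`. -/
noncomputable def Pf (k : ℕ) (x : ℝ) : ℝ :=
  (1 - ((k : ℝ) + 2) * x) ^ (k + 2) - ((k : ℝ) + 1) ^ (k + 1) * (x ^ (k + 1) * (1 - x))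

lemma Pf_hasDerivAt (k : ℕ) (x : ℝ) :
    HasDerivAt (Pf k)
      ((((k : ℝ)) + 2) * (1 - ((k : ℝ) + 2) * x) ^ (k + 1) * (-(((k : ℝ)) + 2))
        - ((k : ℝ) + 1) ^ (k + 1) * ((((k : ℝ)) + 1) * x ^ k * (1 - x) + x ^ (k + 1) * (-1))) x := by
  have h1 : HasDerivAt (fun t : ℝ => 1 - ((k : ℝ) + 2) * t) (-(((k : ℝ)) + 2)) x := by
    simpa using ((hasDerivAt_id x).const_mul ((k : ℝ) + 2)).const_sub 1
  have hpow := h1.pow (k + 2)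
  have hx1 := hasDerivAt_pow (k + 1) x
  have hx2 : HasDerivAt (fun t : ℝ => 1 - t) (-1 : ℝ) x := by
    simpa using (hasDerivAt_id x).const_sub 1
  have hprod := (hx1.mul hx2).const_mul (((k : ℝ) + 1) ^ (k + 1))
  have := hpow.sub hprod
  refine this.congr_deriv ?_
  push_cast
  try simp only [Nat.add_sub_cancel]
  try ring

lemma Pf_strictAntiOn (k : ℕ) : StrictAntiOn (Pf k) (Icc 0 (1 / ((k : ℝ) + 2))) := by
  have hK2 : (0 : ℝ) < (k : ℝ) + 2 := by positivity
  apply strictAntiOn_of_deriv_neg (convex_Icc _ _)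
  · exact fun x _ => ((Pf_hasDerivAt k x).continuousAt).continuousWithinAt
  · intro x hx
    rw [interior_Icc] at hx
    rw [(Pf_hasDerivAt k x).deriv]
    have hx0 : 0 < x := hx.1
    have hxK : x * ((k : ℝ) + 2) < 1 := by
      have := hx.2; rw [lt_div_iff₀ hK2] at this; exact this
    have hB : 0 < 1 - ((k : ℝ) + 2) * x := by nlinarith
    have hBp : 0 < (1 - ((k : ℝ) + 2) * x) ^ (k + 1) := pow_pos hB _
    have hxk : 0 < x ^ k := pow_pos hx0 _
    have hCp : 0 < ((k : ℝ) + 1) ^ (k + 1) := by positivity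
    have key : (((k : ℝ)) + 1) * x ^ k * (1 - x) + x ^ (k + 1) * (-1)
        = x ^ k * (((k : ℝ) + 1) - ((k : ℝ) + 2) * x) := by
      rw [pow_succ]; ring
    have hpos : 0 < ((k : ℝ) + 1) - ((k : ℝ) + 2) * x := by nlinarith
    have h2 : 0 < ((k : ℝ) + 1) ^ (k + 1) * (x ^ k * (((k : ℝ) + 1) - ((k : ℝ) + 2) * x)) := by
      positivity
    have h3 : 0 < (((k : ℝ)) + 2) * (1 - ((k : ℝ) + 2) * x) ^ (k + 1) * (((k : ℝ)) + 2) := by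
      positivity
    rw [key]
    nlinarith

lemma Pf_zero (k : ℕ) : Pf k 0 = 1 := by simp [Pf]

lemma Pf_end (k : ℕ) : Pf k (1 / ((k : ℝ) + 2)) < 0 := by
  have hK2 : (0 : ℝ) < (k : ℝ) + 2 := by positivity
  have h1 : 1 - ((k : ℝ) + 2) * (1 / ((k : ℝ) + 2)) = 0 := by field_simp; ring
  have h2 : (0:ℝ) < 1 - 1 / ((k : ℝ) + 2) := by
    rw [sub_pos, div_lt_one hK2]; linarith
  rw [Pf, h1]
  have : (0:ℝ) ^ (k+2) = 0 := by simp
  rw [this]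
  have : 0 < ((k : ℝ) + 1) ^ (k + 1) * ((1 / ((k : ℝ) + 2)) ^ (k + 1) * (1 - 1 / ((k : ℝ) + 2))) := by
    positivity
  linarith

lemma Pf_exists_root (k : ℕ) :
    ∃ x ∈ Ioo (0:ℝ) (1 / ((k : ℝ) + 2)), Pf k x = 0 := by
  have hK2 : (0 : ℝ) < (k : ℝ) + 2 := by positivity
  have hab : (0:ℝ) ≤ 1 / ((k : ℝ) + 2) := by positivity
  have hc : ContinuousOn (Pf k) (Icc 0 (1 / ((k : ℝ) + 2))) :=
    fun x _ => ((Pf_hasDerivAt k x).continuousAt).continuousWithinAt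
  have := intermediate_value_Ioo' hab hc (a := 0) (b := 1 / ((k : ℝ) + 2))
  have h0 : (0:ℝ) ∈ Ioo (Pf k (1 / ((k : ℝ) + 2))) (Pf k 0) := by
    constructor
    · exact Pf_end k
    · rw [Pf_zero]; norm_num
  obtain ⟨x, hx, hPx⟩ := this h0
  exact ⟨x, hx, hPx⟩

/-- At `t = 1/(2k+3)`, `Pf` is negative. -/
lemma Pf_two (k : ℕ) : Pf k (1 / (2*(k:ℝ) + 3)) < 0 := by
  have hd : (0:ℝ) < 2*(k:ℝ)+3 := by positivity
  set t : ℝ := 1 / (2*(k:ℝ) + 3) with ht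
  set r : ℝ := ((k:ℝ)+1) / (2*(k:ℝ)+3) with hr
  have e1 : 1 - ((k : ℝ) + 2) * t = r := by rw [ht, hr]; field_simp; ring
  have e2 : ((k:ℝ)+1) * t = r := by rw [ht, hr]; field_simp
  have e3 : 1 - t = 2*r := by rw [ht, hr]; field_simp; ring
  have hPt : Pf k t = r ^ (k+2) - r^(k+1) * (2*r) := by
    rw [Pf, e1, e3,
      show ((k:ℝ)+1)^(k+1) * (t^(k+1) * (2*r)) = (((k:ℝ)+1)*t)^(k+1) * (2*r) by
        rw [mul_pow]; ring,
      e2]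
  have hrpos : 0 < r := by rw [hr]; positivity
  rw [hPt, pow_succ]
  nlinarith [pow_pos hrpos (k+1)]

/-- Log of the rate function. -/
noncomputable def gf (k : ℕ) (x : ℝ) : ℝ :=
  (1 - x) * Real.log (1 - x) - (1 - ((k:ℝ)+2) * x) * Real.log (1 - ((k:ℝ)+2) * x)
    - (((k:ℝ)+1) * x) * Real.log (((k:ℝ)+1) * x)

/-- Derivative of `gf`. -/
noncomputable def Gf (k : ℕ) (x : ℝ) : ℝ :=
  -Real.log (1 - x) + ((k:ℝ)+2) * Real.log (1 - ((k:ℝ)+2) * x)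
    - ((k:ℝ)+1) * Real.log (((k:ℝ)+1) * x)

lemma hasDerivAt_xlogx {f : ℝ → ℝ} {f' x : ℝ} (hf : HasDerivAt f f' x) (h : 0 < f x) :
    HasDerivAt (fun t => f t * Real.log (f t)) (f' * Real.log (f x) + f') x := by
  have hlog := (Real.hasDerivAt_log h.ne').comp x hf
  have := hf.mul hlog
  refine this.congr_deriv ?_
  field_simp
  rfl

section
variable {k : ℕ} {x : ℝ}

lemma mem_facts (hx : x ∈ Ioo (0:ℝ) (1 / ((k : ℝ) + 2))) :
    0 < x ∧ 0 < 1 - x ∧ 0 < 1 - ((k:ℝ)+2) * x ∧ 0 < ((k:ℝ)+1) * x := by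
  have hK2 : (0 : ℝ) < (k : ℝ) + 2 := by positivity
  have h2 := (lt_div_iff₀ hK2).mp hx.2
  refine ⟨hx.1, by nlinarith, by nlinarith, mul_pos (by positivity) hx.1⟩

lemma gf_hasDerivAt (hx : x ∈ Ioo (0:ℝ) (1 / ((k : ℝ) + 2))) :
    HasDerivAt (gf k) (Gf k x) x := by
  obtain ⟨hx0, hA, hB, hC⟩ := mem_facts hx
  have hfA : HasDerivAt (fun t : ℝ => 1 - t) (-1 : ℝ) x := by
    simpa using (hasDerivAt_id x).const_sub 1
  have hfB : HasDerivAt (fun t : ℝ => 1 - ((k : ℝ) + 2) * t) (-(((k : ℝ)) + 2)) x := by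
    simpa using ((hasDerivAt_id x).const_mul ((k : ℝ) + 2)).const_sub 1
  have hfC : HasDerivAt (fun t : ℝ => ((k : ℝ) + 1) * t) ((k : ℝ) + 1) x := by
    simpa using (hasDerivAt_id x).const_mul ((k : ℝ) + 1)
  have h1 := hasDerivAt_xlogx hfA hA
  have h2 := hasDerivAt_xlogx hfB hB
  have h3 := hasDerivAt_xlogx hfC hC
  have := (h1.sub h2).sub h3
  refine this.congr_deriv ?_
  simp only [Gf]
  ring

lemma Gf_hasDerivAt (hx : x ∈ Ioo (0:ℝ) (1 / ((k : ℝ) + 2))) :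
    HasDerivAt (Gf k)
      (-((1 - x)⁻¹ * (-1)) + ((k:ℝ)+2) * ((1 - ((k:ℝ)+2)*x)⁻¹ * (-(((k:ℝ))+2)))
        - ((k:ℝ)+1) * ((((k:ℝ)+1)*x)⁻¹ * ((k:ℝ)+1))) x := by
  obtain ⟨hx0, hA, hB, hC⟩ := mem_facts hx
  have hfA : HasDerivAt (fun t : ℝ => 1 - t) (-1 : ℝ) x := by
    simpa using (hasDerivAt_id x).const_sub 1
  have hfB : HasDerivAt (fun t : ℝ => 1 - ((k : ℝ) + 2) * t) (-(((k : ℝ)) + 2)) x := by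
    simpa using ((hasDerivAt_id x).const_mul ((k : ℝ) + 2)).const_sub 1
  have hfC : HasDerivAt (fun t : ℝ => ((k : ℝ) + 1) * t) ((k : ℝ) + 1) x := by
    simpa using (hasDerivAt_id x).const_mul ((k : ℝ) + 1)
  have l1 := (Real.hasDerivAt_log hA.ne').comp x hfA
  have l2 := (Real.hasDerivAt_log hB.ne').comp x hfB
  have l3 := (Real.hasDerivAt_log hC.ne').comp x hfC
  exact (l1.neg.add (l2.const_mul ((k:ℝ)+2))).sub (l3.const_mul ((k:ℝ)+1))

lemma Gf_deriv_neg (hx : x ∈ Ioo (0:ℝ) (1 / ((k : ℝ) + 2))) :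
    -((1 - x)⁻¹ * (-1)) + ((k:ℝ)+2) * ((1 - ((k:ℝ)+2)*x)⁻¹ * (-(((k:ℝ))+2)))
        - ((k:ℝ)+1) * ((((k:ℝ)+1)*x)⁻¹ * ((k:ℝ)+1)) < 0 := by
  obtain ⟨hx0, hA, hB, hC⟩ := mem_facts hx
  have e1 : (1 - x)⁻¹ ≤ (1 - ((k:ℝ)+2)*x)⁻¹ := by
    apply inv_anti₀ hB
    nlinarith
  have e2 : (1 - ((k:ℝ)+2)*x)⁻¹ < (((k:ℝ)+2) * ((k:ℝ)+2)) * (1 - ((k:ℝ)+2)*x)⁻¹ := by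
    have hBi : 0 < (1 - ((k:ℝ)+2)*x)⁻¹ := by positivity
    have hK : (1:ℝ) < ((k:ℝ)+2) * ((k:ℝ)+2) := by nlinarith
    exact (lt_mul_iff_one_lt_left hBi).mpr hK
  have e3 : 0 < ((k:ℝ)+1) * ((((k:ℝ)+1)*x)⁻¹ * ((k:ℝ)+1)) :=
    mul_pos (by positivity) (mul_pos (inv_pos.mpr hC) (by positivity))
  nlinarith

lemma Gf_strictAntiOn (k : ℕ) : StrictAntiOn (Gf k) (Ioo (0:ℝ) (1 / ((k : ℝ) + 2))) := by
  apply strictAntiOn_of_deriv_neg (convex_Ioo _ _)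
  · exact fun x hx => ((Gf_hasDerivAt hx).continuousAt).continuousWithinAt
  · intro x hx
    rw [interior_Ioo] at hx
    rw [(Gf_hasDerivAt hx).deriv]
    exact Gf_deriv_neg hx
end

section
variable {k : ℕ} {x : ℝ}

lemma root_log (hx : x ∈ Ioo (0:ℝ) (1 / ((k : ℝ) + 2))) (hP : Pf k x = 0) :
    ((k:ℝ)+2) * Real.log (1 - ((k:ℝ)+2) * x)
      = Real.log (1 - x) + ((k:ℝ)+1) * Real.log (((k:ℝ)+1) * x) := by
  obtain ⟨hx0, hA, hB, hC⟩ := mem_facts hx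
  have hBC : (1 - ((k:ℝ)+2) * x) ^ (k+2) = (((k:ℝ)+1) * x) ^ (k+1) * (1 - x) := by
    have h1 : ((k:ℝ)+1) ^ (k+1) * (x ^ (k+1) * (1-x)) = (((k:ℝ)+1) * x) ^ (k+1) * (1 - x) := by
      rw [mul_pow]; ring
    rw [Pf] at hP
    linarith [hP, h1]
  have := congrArg Real.log hBC
  rw [Real.log_pow, Real.log_mul (pow_ne_zero _ hC.ne') hA.ne', Real.log_pow] at this
  push_cast at this
  linarith

lemma bez_eq_exp (hx : x ∈ Ioo (0:ℝ) (1 / ((k : ℝ) + 2))) :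
    bezoutRateFun (k+2) x = Real.exp (gf k x) := by
  obtain ⟨hx0, hA, hB, hC⟩ := mem_facts hx
  have c2 : ((k+2:ℕ):ℝ) = (k:ℝ)+2 := by push_cast; ring
  have c1 : ((k:ℝ)+2) - 1 = (k:ℝ)+1 := by ring
  rw [bezoutRateFun, c2, c1, Real.rpow_def_of_pos hA, Real.rpow_def_of_pos hB,
    Real.rpow_def_of_pos hC, ← Real.exp_add, ← Real.exp_sub, gf]
  congr 1
  ring

lemma bez_val (hx : x ∈ Ioo (0:ℝ) (1 / ((k : ℝ) + 2))) (hP : Pf k x = 0) :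
    bezoutRateFun (k+2) x = (1 - x) / (1 - ((k:ℝ)+2) * x) := by
  obtain ⟨hx0, hA, hB, hC⟩ := mem_facts hx
  have hlog := root_log hx hP
  rw [bez_eq_exp hx, gf]
  have he : (1 - x) * Real.log (1 - x) - (1 - ((k:ℝ)+2) * x) * Real.log (1 - ((k:ℝ)+2) * x)
      - (((k:ℝ)+1) * x) * Real.log (((k:ℝ)+1) * x)
      = Real.log (1 - x) - Real.log (1 - ((k:ℝ)+2) * x) := by
    linear_combination x * hlog
  rw [he, Real.exp_sub, Real.exp_log hA, Real.exp_log hB]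

lemma Gf_zero (hx : x ∈ Ioo (0:ℝ) (1 / ((k : ℝ) + 2))) (hP : Pf k x = 0) :
    Gf k x = 0 := by
  have hlog := root_log hx hP
  rw [Gf]; linarith

lemma gf_max (hx : x ∈ Ioo (0:ℝ) (1 / ((k : ℝ) + 2))) (hP : Pf k x = 0) :
    ∀ y ∈ Ioo (0:ℝ) (1 / ((k : ℝ) + 2)), gf k y ≤ gf k x := by
  have hsub1 : Ioc (0:ℝ) x ⊆ Ioo (0:ℝ) (1 / ((k : ℝ) + 2)) := fun y hy =>
    ⟨hy.1, lt_of_le_of_lt hy.2 hx.2⟩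
  have hsub2 : Ico x (1 / ((k : ℝ) + 2)) ⊆ Ioo (0:ℝ) (1 / ((k : ℝ) + 2)) := fun y hy =>
    ⟨lt_of_lt_of_le hx.1 hy.1, hy.2⟩
  have hmono : StrictMonoOn (gf k) (Ioc (0:ℝ) x) := by
    apply strictMonoOn_of_deriv_pos (convex_Ioc _ _)
    · exact fun y hy => ((gf_hasDerivAt (hsub1 hy)).continuousAt).continuousWithinAt
    · intro y hy
      rw [interior_Ioc] at hy
      have hy' : y ∈ Ioo (0:ℝ) (1 / ((k : ℝ) + 2)) := ⟨hy.1, lt_trans hy.2 hx.2⟩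
      rw [(gf_hasDerivAt hy').deriv]
      have := Gf_strictAntiOn k hy' hx hy.2
      rw [Gf_zero hx hP] at this
      exact this
  have hanti : StrictAntiOn (gf k) (Ico x (1 / ((k : ℝ) + 2))) := by
    apply strictAntiOn_of_deriv_neg (convex_Ico _ _)
    · exact fun y hy => ((gf_hasDerivAt (hsub2 hy)).continuousAt).continuousWithinAt
    · intro y hy
      rw [interior_Ico] at hy
      have hy' : y ∈ Ioo (0:ℝ) (1 / ((k : ℝ) + 2)) := ⟨lt_trans hx.1 hy.1, hy.2⟩
      rw [(gf_hasDerivAt hy').deriv]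
      have := Gf_strictAntiOn k hx hy' hy.1
      rw [Gf_zero hx hP] at this
      exact this
  intro y hy
  rcases lt_trichotomy y x with h | h | h
  · exact le_of_lt (hmono ⟨hy.1, le_of_lt h⟩ ⟨hx.1, le_refl x⟩ h)
  · rw [h]
  · exact le_of_lt (hanti ⟨le_refl x, hx.2⟩ ⟨le_of_lt h, hy.2⟩ h)

end

theorem optimal_bezout_rate (m : ℕ) (hm : 2 ≤ m) :
    (∃! x : ℝ, x ∈ Set.Ioo (0 : ℝ) (1 / m) ∧
      (1 - m * x) ^ m - ((m : ℝ) - 1) ^ (m - 1) * x ^ (m - 1) * (1 - x) = 0) ∧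
    ∀ x_m : ℝ, x_m ∈ Set.Ioo (0 : ℝ) (1 / m) →
      (1 - m * x_m) ^ m - ((m : ℝ) - 1) ^ (m - 1) * x_m ^ (m - 1) * (1 - x_m) = 0 →
      (∀ y ∈ Set.Ioo (0 : ℝ) (1 / (m : ℝ)), bezoutRateFun m y ≤ bezoutRateFun m x_m) ∧
      bezoutRateFun m x_m = (1 - x_m) / (1 - m * x_m) ∧
      (1 - x_m) / (1 - m * x_m) < 2 := by
  obtain ⟨k, rfl⟩ : ∃ k, m = k + 2 := ⟨m - 2, by omega⟩
  have c2 : ((k+2:ℕ):ℝ) = (k:ℝ)+2 := by push_cast; ring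
  have hdiv : (1 : ℝ) / ((k+2 : ℕ) : ℝ) = 1 / ((k:ℝ)+2) := by rw [c2]
  have hPeq : ∀ x : ℝ,
      (1 - ((k+2:ℕ):ℝ) * x) ^ (k+2) - (((k+2:ℕ):ℝ) - 1) ^ ((k+2) - 1) * x ^ ((k+2) - 1) * (1 - x)
        = Pf k x := by
    intro x
    rw [Pf, c2, show k + 2 - 1 = k + 1 from rfl]
    ring
  constructor
  · obtain ⟨x₀, hx₀, hP₀⟩ := Pf_exists_root k
    refine ⟨x₀, ⟨by rw [hdiv]; exact hx₀, by rw [hPeq]; exact hP₀⟩, ?_⟩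
    rintro y ⟨hy, hPy⟩
    rw [hdiv] at hy
    rw [hPeq] at hPy
    exact (Pf_strictAntiOn k).injOn (Ioo_subset_Icc_self hy) (Ioo_subset_Icc_self hx₀)
      (by rw [hPy, hP₀])
  · intro x_m hmem hroot
    rw [hdiv] at hmem
    rw [hPeq] at hroot
    obtain ⟨hx0, hA, hB, hC⟩ := mem_facts hmem
    refine ⟨?_, ?_, ?_⟩
    · intro y hy
      rw [hdiv] at hy
      rw [bez_eq_exp hy, bez_eq_exp hmem]
      exact Real.exp_le_exp.mpr (gf_max hmem hroot y hy)
    · rw [c2]; exact bez_val hmem hroot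
    · rw [c2]
      have hd3 : (0:ℝ) < 2*(k:ℝ)+3 := by positivity
      have hlt : x_m < 1 / (2*(k:ℝ)+3) := by
        by_contra hcon
        push_neg at hcon
        have htIcc : 1 / (2*(k:ℝ)+3) ∈ Icc (0:ℝ) (1 / ((k:ℝ)+2)) := by
          constructor
          · positivity
          · apply one_div_le_one_div_of_le (by positivity)
            linarith
        have hxIcc : x_m ∈ Icc (0:ℝ) (1 / ((k:ℝ)+2)) := Ioo_subset_Icc_self hmem
        rcases eq_or_lt_of_le hcon with h | h
        · have := Pf_two k
          rw [h] at this
          rw [hroot] at this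
          exact lt_irrefl 0 this
        · have := Pf_strictAntiOn k htIcc hxIcc h
          rw [hroot] at this
          exact absurd (lt_trans this (Pf_two k)) (lt_irrefl 0)
      rw [div_lt_iff₀ hB]
      have : x_m * (2*(k:ℝ)+3) < 1 := (lt_div_iff₀ hd3).mp hlt
      linarith
end
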